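/- arXiv:1204.3308 — 3 statements merged into one kernel-verified Lean document; each statement's English description precedes it below -/
import Mathlib

section
/- Let Y be a nonnegative random variable such that for every integer m ≥ 1, E[Y^m]^{1/m} ≤ b(m) r, where r > 0, b(2m)^{2m} = (2m)!/(m! 2^m) and b(2m+1)^{2m+1} = (2m+1)!/((m+1)! sqrt(m+1/2)) 2^{-(m+1/2)}. Then for every t in [0, 1/(2r)), E[exp(t Y)] ≤ (1 + t r) exp(t² r² / 2). -/
open MeasureTheory ProbabilityTheory Real

/-- `khinchineConstPow m = b(m)^m` where `b(2m)^{2m} = (2m)!/(m! 2^m)` and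
`b(2m+1)^{2m+1} = (2m+1)!/((m+1)! √(m+1/2)) 2^{-(m+1/2)}`. -/
noncomputable def khinchineConstPow (m : ℕ) : ℝ :=
  if m % 2 = 0 then
    (Nat.factorial m : ℝ) / ((Nat.factorial (m / 2) : ℝ) * 2 ^ (m / 2))
  else
    (Nat.factorial m : ℝ) / ((Nat.factorial (m / 2 + 1) : ℝ) *
      Real.sqrt ((m / 2 : ℕ) + 1 / 2)) * (2 : ℝ) ^ (-((m : ℝ) / 2))

/-!
Expand `exp (t Y)` in its power series and integrate term by term: the `n`-th term is at most
`b(n)^n (t r)^n / n!`. With `c = t r`, the even terms `b(2k)^{2k} c^{2k} / (2k)!` are exactly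
`(c² / 2)^k / k!`, and the odd terms are at most `c (c² / 2)^k / k!`, so the whole series is
bounded by `exp (c² / 2) + c exp (c² / 2)`.
-/

lemma khinchineConstPow_zero : khinchineConstPow 0 = 1 := by
  simp [khinchineConstPow]

lemma khinchineConstPow_even_div_factorial (k : ℕ) :
    khinchineConstPow (2 * k) / (2 * k).factorial = ((2 : ℝ) ^ k * k.factorial)⁻¹ := by
  simp only [khinchineConstPow, Nat.mul_mod_right, if_true, Nat.mul_div_cancel_left k two_pos]
  field_simp

lemma two_rpow_neg_odd_half (k : ℕ) :
    (2 : ℝ) ^ (-(((2 * k + 1 : ℕ) : ℝ) / 2)) = ((2 : ℝ) ^ k * √2)⁻¹ := by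
  rw [Real.rpow_neg zero_le_two, Real.sqrt_eq_rpow, ← Real.rpow_natCast,
    ← Real.rpow_add two_pos]
  push_cast
  ring_nf

lemma khinchineConstPow_odd_div_factorial_le (k : ℕ) :
    khinchineConstPow (2 * k + 1) / (2 * k + 1).factorial ≤ ((2 : ℝ) ^ k * k.factorial)⁻¹ := by
  have hodd : (2 * k + 1) % 2 ≠ 0 := by omega
  have hhalf : (2 * k + 1) / 2 = k := by omega
  have hsqrt : √((k : ℝ) + 1 / 2) * √2 = √(2 * k + 1) := by
    rw [← Real.sqrt_mul (by positivity)]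
    ring_nf
  have hsqrt_ge : 1 ≤ √(2 * (k : ℝ) + 1) :=
    Real.one_le_sqrt.2 (by linarith [k.cast_nonneg (α := ℝ)])
  have hfac_le : (k.factorial : ℝ) ≤ (k + 1).factorial := by
    exact_mod_cast Nat.factorial_le k.le_succ
  simp only [khinchineConstPow, if_neg hodd, hhalf, two_rpow_neg_odd_half]
  calc (2 * k + 1).factorial / ((k + 1).factorial * √((k : ℝ) + 1 / 2)) * ((2 : ℝ) ^ k * √2)⁻¹ /
        (2 * k + 1).factorial
      = ((2 : ℝ) ^ k * ((k + 1).factorial * √(2 * k + 1)))⁻¹ := by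
        rw [← hsqrt]
        field_simp
    _ ≤ ((2 : ℝ) ^ k * k.factorial)⁻¹ := by
        gcongr
        exact hfac_le.trans (le_mul_of_one_le_right (by positivity) hsqrt_ge)

lemma ENNReal.tsum_ofReal_pow_div_factorial {x : ℝ} (hx : 0 ≤ x) :
    ∑' k, ENNReal.ofReal (x ^ k / k.factorial) = ENNReal.ofReal (exp x) := by
  have hexp : HasSum (fun k => x ^ k / k.factorial) (exp x) :=
    Real.exp_eq_exp_ℝ ▸ NormedSpace.expSeries_div_hasSum_exp x
  rw [← ENNReal.ofReal_tsum_of_nonneg (fun _ => by positivity) hexp.summable, hexp.tsum_eq]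

lemma inv_two_pow_mul_factorial_mul_pow (c : ℝ) (k : ℕ) :
    ((2 : ℝ) ^ k * k.factorial)⁻¹ * c ^ (2 * k) = (c ^ 2 / 2) ^ k / k.factorial := by
  rw [pow_mul, div_pow]
  field_simp

lemma tsum_ofReal_mul_pow_le_one_add_mul_exp {a : ℕ → ℝ}
    (heven : ∀ k, a (2 * k) ≤ ((2 : ℝ) ^ k * k.factorial)⁻¹)
    (hodd : ∀ k, a (2 * k + 1) ≤ ((2 : ℝ) ^ k * k.factorial)⁻¹) {c : ℝ} (hc : 0 ≤ c) :
    ∑' n, ENNReal.ofReal (a n * c ^ n) ≤ ENNReal.ofReal ((1 + c) * exp (c ^ 2 / 2)) := by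
  set x := c ^ 2 / 2
  have hx : 0 ≤ x := by positivity
  have hsum_even : ∑' k, ENNReal.ofReal (a (2 * k) * c ^ (2 * k)) ≤ ENNReal.ofReal (exp x) := by
    rw [← ENNReal.tsum_ofReal_pow_div_factorial hx]
    refine ENNReal.tsum_le_tsum fun k => ENNReal.ofReal_le_ofReal ?_
    rw [← inv_two_pow_mul_factorial_mul_pow]
    gcongr
    exact heven k
  have hsum_odd : ∑' k, ENNReal.ofReal (a (2 * k + 1) * c ^ (2 * k + 1)) ≤
      ENNReal.ofReal c * ENNReal.ofReal (exp x) := by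
    rw [← ENNReal.tsum_ofReal_pow_div_factorial hx, ← ENNReal.tsum_mul_left]
    refine ENNReal.tsum_le_tsum fun k => ?_
    rw [← ENNReal.ofReal_mul hc, ← inv_two_pow_mul_factorial_mul_pow, pow_succ]
    refine ENNReal.ofReal_le_ofReal ?_
    rw [mul_comm c, ← mul_assoc]
    gcongr
    exact hodd k
  rw [← tsum_even_add_odd ENNReal.summable ENNReal.summable, add_mul, one_mul,
    ENNReal.ofReal_add (by positivity) (by positivity), ENNReal.ofReal_mul hc]
  exact add_le_add hsum_even hsum_odd

lemma lintegral_ofReal_exp_mul_eq_tsum {Ω : Type*} [MeasurableSpace Ω] (μ : Measure Ω)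
    {Y : Ω → ℝ} (hY : Measurable Y) (hYpos : ∀ ω, 0 ≤ Y ω) {t : ℝ} (ht : 0 ≤ t) :
    ∫⁻ ω, ENNReal.ofReal (exp (t * Y ω)) ∂μ =
      ∑' n, ENNReal.ofReal (t ^ n / n.factorial) * ∫⁻ ω, ENNReal.ofReal (Y ω ^ n) ∂μ := by
  have hterm : ∀ n ω, ENNReal.ofReal ((t * Y ω) ^ n / n.factorial) =
      ENNReal.ofReal (t ^ n / n.factorial) * ENNReal.ofReal (Y ω ^ n) := fun n ω => by
    rw [← ENNReal.ofReal_mul (by positivity), mul_pow, div_mul_eq_mul_div, mul_div_right_comm]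
  calc ∫⁻ ω, ENNReal.ofReal (exp (t * Y ω)) ∂μ
      = ∫⁻ ω, ∑' n, ENNReal.ofReal ((t * Y ω) ^ n / n.factorial) ∂μ := by
        refine lintegral_congr fun ω => ?_
        have := hYpos ω
        rw [← ENNReal.tsum_ofReal_pow_div_factorial (by positivity)]
    _ = ∑' n, ∫⁻ ω, ENNReal.ofReal ((t * Y ω) ^ n / n.factorial) ∂μ :=
        lintegral_tsum fun n =>
          (((hY.const_mul t).pow_const n).div_const _).ennreal_ofReal.aemeasurable
    _ = ∑' n, ENNReal.ofReal (t ^ n / n.factorial) * ∫⁻ ω, ENNReal.ofReal (Y ω ^ n) ∂μ := by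
        simp_rw [hterm]
        exact tsum_congr fun n => lintegral_const_mul _ (hY.pow_const n).ennreal_ofReal

theorem moment_bounds_laplace_estimate {Ω : Type*} [MeasureSpace Ω]
    [IsProbabilityMeasure (ℙ : Measure Ω)]
    (Y : Ω → ℝ) (hYmeas : Measurable Y) (hYpos : ∀ ω, 0 ≤ Y ω)
    (r : ℝ) (hr : 0 < r)
    (hmom : ∀ m : ℕ, 1 ≤ m →
      ∫⁻ ω, ENNReal.ofReal (Y ω ^ m) ∂ℙ ≤ ENNReal.ofReal (khinchineConstPow m * r ^ m))
    (t : ℝ) (ht : t ∈ Set.Ico (0 : ℝ) (1 / (2 * r))) :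
    ∫⁻ ω, ENNReal.ofReal (Real.exp (t * Y ω)) ∂ℙ ≤
      ENNReal.ofReal ((1 + t * r) * Real.exp (t ^ 2 * r ^ 2 / 2)) := by
  obtain ⟨ht0, -⟩ := ht
  have hmom_all : ∀ m : ℕ,
      ∫⁻ ω, ENNReal.ofReal (Y ω ^ m) ∂ℙ ≤ ENNReal.ofReal (khinchineConstPow m * r ^ m) := by
    rintro (_ | m)
    · simp [khinchineConstPow_zero]
    · exact hmom _ m.succ_pos
  calc ∫⁻ ω, ENNReal.ofReal (exp (t * Y ω)) ∂ℙ
      = ∑' n, ENNReal.ofReal (t ^ n / n.factorial) * ∫⁻ ω, ENNReal.ofReal (Y ω ^ n) ∂ℙ :=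
        lintegral_ofReal_exp_mul_eq_tsum ℙ hYmeas hYpos ht0
    _ ≤ ∑' n, ENNReal.ofReal (khinchineConstPow n / n.factorial * (t * r) ^ n) := by
        refine ENNReal.tsum_le_tsum fun n => ?_
        rw [show khinchineConstPow n / n.factorial * (t * r) ^ n =
            t ^ n / n.factorial * (khinchineConstPow n * r ^ n) by ring,
          ENNReal.ofReal_mul (by positivity)]
        gcongr
        exact hmom_all n
    _ ≤ ENNReal.ofReal ((1 + t * r) * exp ((t * r) ^ 2 / 2)) :=
        tsum_ofReal_mul_pow_le_one_add_mul_exp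
          (fun k => (khinchineConstPow_even_div_factorial k).le)
          khinchineConstPow_odd_div_factorial_le (mul_nonneg ht0 hr.le)
    _ = ENNReal.ofReal ((1 + t * r) * exp (t ^ 2 * r ^ 2 / 2)) := by ring_nf
end

section
/- Let Y be a nonnegative random variable satisfying E[exp(t(Y - r))] ≤ exp(-r t) (1 - 2rt)^{-1/2} for all t in [0, 1/(2r)), where r > 0. Then for every ε > 0, P(Y ≥ ε + r) ≤ exp( -(ε/(2r)) (1 - (r/ε) log(1 + ε/r)) ). -/
open MeasureTheory ProbabilityTheory Real

theorem mgf_bound_concentration {Ω : Type*} [MeasureSpace Ω]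
    [IsProbabilityMeasure (ℙ : Measure Ω)]
    (Y : Ω → ℝ) (hYmeas : Measurable Y)
    (r : ℝ) (hr : 0 < r)
    (hmgf : ∀ t : ℝ, t ∈ Set.Ico (0 : ℝ) (1 / (2 * r)) →
      ∫⁻ ω, ENNReal.ofReal (Real.exp (t * (Y ω - r))) ∂ℙ ≤
        ENNReal.ofReal (Real.exp (-r * t) / Real.sqrt (1 - 2 * r * t)))
    (ε : ℝ) (hε : 0 < ε) :
    (ℙ {ω | ε + r ≤ Y ω}).toReal ≤
      Real.exp (-(ε / (2 * r)) * (1 - (r / ε) * Real.log (1 + ε / r))) := by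
  set t : ℝ := ε / (2 * r * (ε + r)) with ht_def
  have hεr : 0 < ε + r := by linarith
  have ht0 : 0 < t := div_pos hε (by positivity)
  have htmem : t ∈ Set.Ico (0 : ℝ) (1 / (2 * r)) := by
    constructor
    · exact ht0.le
    · rw [ht_def, div_lt_div_iff₀ (by positivity) (by positivity)]
      nlinarith
  have hA : 1 - 2 * r * t = r / (ε + r) := by
    rw [ht_def]; field_simp; ring
  have hApos : (0:ℝ) < 1 - 2 * r * t := by rw [hA]; positivity
  -- Markov step
  have hmeas : AEMeasurable (fun ω => ENNReal.ofReal (Real.exp (t * (Y ω - r)))) ℙ := by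
    exact (ENNReal.measurable_ofReal.comp
      (Real.measurable_exp.comp ((hYmeas.sub measurable_const).const_mul t))).aemeasurable
  have hmarkov := mul_meas_ge_le_lintegral₀ hmeas (ENNReal.ofReal (Real.exp (t * ε)))
  have hset : {ω | ENNReal.ofReal (Real.exp (t * ε)) ≤ ENNReal.ofReal (Real.exp (t * (Y ω - r)))}
      = {ω | ε + r ≤ Y ω} := by
    ext ω
    simp only [Set.mem_setOf_eq, ENNReal.ofReal_le_ofReal_iff (Real.exp_pos _).le,
      Real.exp_le_exp]
    constructor
    · intro h; nlinarith [mul_le_mul_of_nonneg_left (le_of_mul_le_mul_left (by linarith) ht0) ht0.le]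
    · intro h; nlinarith
  rw [hset] at hmarkov
  have hchain : ENNReal.ofReal (Real.exp (t * ε)) * ℙ {ω | ε + r ≤ Y ω}
      ≤ ENNReal.ofReal (Real.exp (-r * t) / Real.sqrt (1 - 2 * r * t)) :=
    hmarkov.trans (hmgf t htmem)
  set B : ℝ := Real.exp (-r * t) / Real.sqrt (1 - 2 * r * t) with hB_def
  have hBpos : 0 < B := by
    apply div_pos (Real.exp_pos _) (Real.sqrt_pos.mpr hApos)
  have hle : ℙ {ω | ε + r ≤ Y ω} ≤ ENNReal.ofReal (B / Real.exp (t * ε)) := by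
    rw [ENNReal.ofReal_div_of_pos (Real.exp_pos _)]
    rw [ENNReal.le_div_iff_mul_le (by simp [Real.exp_pos, (Real.exp_pos (t*ε)).ne']) (by simp)]
    rw [mul_comm]
    exact hchain
  have hmain := ENNReal.toReal_le_of_le_ofReal (by positivity) hle
  refine hmain.trans (le_of_eq ?_)
  -- real arithmetic
  have hexp : -r * t - t * ε = -(ε / (2 * r)) := by
    rw [ht_def]; field_simp; ring
  have hsqrt : Real.sqrt (1 - 2 * r * t) = Real.exp (-(Real.log (1 + ε / r) / 2)) := by
    rw [hA]
    have h1 : r / (ε + r) = (1 + ε / r)⁻¹ := by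
      rw [eq_comm, inv_eq_iff_eq_inv, eq_comm, inv_div]; field_simp; ring
    rw [h1, ← Real.exp_log (x := Real.sqrt (1 + ε/r)⁻¹) (by positivity),
      Real.log_sqrt (by positivity), Real.log_inv, neg_div]
  rw [hB_def, hsqrt, ← Real.exp_sub, div_eq_mul_inv, ← Real.exp_neg, ← Real.exp_add]
  congr 1
  rw [show -r * t - -(Real.log (1 + ε / r) / 2) + -(t * ε)
      = (-r * t - t * ε) + Real.log (1 + ε / r) / 2 from by ring, hexp]
  field_simp
  ring
end

section
/- Let H be a Hilbert space and T a bounded self-adjoint nonnegative operator on H with operator norm at most 1 such that Id - T is injective. For h ∈ H with Σ_{n≥0} ⟨h, Tⁿ h⟩ < ∞, the supremum over f ∈ H of ( ⟨h, f⟩ - (1/2) ⟨f, (Id - T) f⟩ ) equals (1/2) Σ_{n≥0} ⟨h, Tⁿ h⟩. -/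
/-!
The partial Neumann sums `g N = ∑ n < N, Tⁿ h` satisfy `(1 - T) (g N) = h - T^N h`. Hence the
concave functional `Φ f = ⟪h, f⟫ - ½ ⟪f, (1 - T) f⟫` takes the value `½ ∑ n < 2N, ⟪h, Tⁿ h⟫` at
`g N`, and, lying below its tangent there, satisfies `Φ f ≤ ½ ∑ n < 2N, ⟪h, Tⁿ h⟫ + ‖T^N h‖ ‖f‖`.
Summability gives `‖T^N h‖² = ⟪h, T^{2N} h⟫ → 0`, and letting `N → ∞` yields both halves of the
supremum.
-/

open Real Filter Finset Topology
open scoped RealInnerProductSpace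

namespace ContinuousLinearMap

variable {E : Type*} [NormedAddCommGroup E] [InnerProductSpace ℝ E]

theorem inner_pow_apply_left {T : E →L[ℝ] E} (hT : (T : E →ₗ[ℝ] E).IsSymmetric) (n : ℕ)
    (x y : E) : ⟪(T ^ n) x, y⟫ = ⟪x, (T ^ n) y⟫ := by
  simpa only [← toLinearMap_pow, coe_coe] using hT.pow n x y

theorem IsPositive.inner_pow_self_nonneg {T : E →L[ℝ] E} (hT : T.IsPositive) (n : ℕ) (x : E) :
    0 ≤ ⟪x, (T ^ n) x⟫ := by
  have hsymm := inner_pow_apply_left hT.isSymmetric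
  obtain ⟨m, rfl | rfl⟩ := Nat.even_or_odd' n
  · rw [two_mul, pow_add, mul_apply_eq_comp, ← hsymm]
    exact real_inner_self_nonneg
  · rw [two_mul, add_assoc, pow_add, pow_succ', mul_apply_eq_comp, mul_apply_eq_comp, ← hsymm]
    exact hT.inner_nonneg_right _

theorem isPositive_one_sub_of_norm_le_one {T : E →L[ℝ] E} (hT : (T : E →ₗ[ℝ] E).IsSymmetric)
    (hT1 : ‖T‖ ≤ 1) : (1 - T).IsPositive := by
  refine (isPositive_iff _).2 ⟨?_, fun x => ?_⟩
  · exact LinearMap.IsSymmetric.sub LinearMap.IsSymmetric.id hT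
  · have : ⟪T x, x⟫ ≤ ⟪x, x⟫ := calc
      ⟪T x, x⟫ ≤ ‖T x‖ * ‖x‖ := real_inner_le_norm _ _
      _ ≤ ‖x‖ * ‖x‖ := by gcongr; exact T.le_of_opNorm_le hT1 x |>.trans (one_mul _).le
      _ = ⟪x, x⟫ := (real_inner_self_eq_norm_mul_norm x).symm
    simpa [inner_sub_left] using this

theorem IsPositive.inner_sub_half_inner_le {S : E →L[ℝ] E} (hS : S.IsPositive) (h f g : E) :
    ⟪h, f⟫ - 1 / 2 * ⟪f, S f⟫ ≤ ⟪h, g⟫ - 1 / 2 * ⟪g, S g⟫ + ⟪h - S g, f - g⟫ := by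
  have hfg := hS.inner_nonneg_right (f - g)
  have hsymm : ⟪S g, f⟫ = ⟪g, S f⟫ := hS.isSymmetric g f
  simp only [map_sub, inner_sub_left, inner_sub_right] at hfg ⊢
  linarith [real_inner_comm f (S g), real_inner_comm g (S g)]

theorem one_sub_apply_geom_sum_apply (T : E →L[ℝ] E) (x : E) (N : ℕ) :
    (1 - T) ((∑ n ∈ range N, T ^ n) x) = x - (T ^ N) x := by
  rw [← mul_apply_eq_comp, mul_neg_geom_sum, sub_apply, one_apply_eq_self]

theorem inner_pow_apply_geom_sum_apply {T : E →L[ℝ] E} (hT : (T : E →ₗ[ℝ] E).IsSymmetric)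
    (x : E) (N : ℕ) :
    ⟪(T ^ N) x, (∑ n ∈ range N, T ^ n) x⟫ = ∑ n ∈ Ico N (2 * N), ⟪x, (T ^ n) x⟫ := by
  rw [_root_.sum_apply, inner_sum, sum_Ico_eq_sum_range, two_mul, Nat.add_sub_cancel]
  refine sum_congr rfl fun n _ => ?_
  rw [inner_pow_apply_left hT, pow_add, mul_apply_eq_comp]

section GeomSum

variable {T : E →L[ℝ] E} (x : E) (N : ℕ)

theorem inner_sub_half_inner_one_sub_geom_sum (hT : (T : E →ₗ[ℝ] E).IsSymmetric) :
    ⟪x, (∑ n ∈ range N, T ^ n) x⟫ - 1 / 2 * ⟪(∑ n ∈ range N, T ^ n) x,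
      (1 - T) ((∑ n ∈ range N, T ^ n) x)⟫ = 1 / 2 * ∑ n ∈ range (2 * N), ⟪x, (T ^ n) x⟫ := by
  have hsplit := sum_range_add_sum_Ico (fun n => ⟪x, (T ^ n) x⟫) (by omega : N ≤ 2 * N)
  rw [one_sub_apply_geom_sum_apply, inner_sub_right, real_inner_comm x,
    real_inner_comm ((T ^ N) x), inner_pow_apply_geom_sum_apply hT, _root_.sum_apply, inner_sum]
  linarith

theorem IsPositive.inner_sub_half_inner_one_sub_le {T : E →L[ℝ] E} (hT : T.IsPositive)
    (hT1 : ‖T‖ ≤ 1) (f : E) :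
    ⟪x, f⟫ - 1 / 2 * ⟪f, (1 - T) f⟫ ≤
      1 / 2 * ∑ n ∈ range (2 * N), ⟪x, (T ^ n) x⟫ + ‖(T ^ N) x‖ * ‖f‖ := by
  set g := (∑ n ∈ range N, T ^ n) x
  have htail : 0 ≤ ⟪(T ^ N) x, g⟫ := by
    rw [inner_pow_apply_geom_sum_apply hT.isSymmetric]
    exact sum_nonneg fun n _ => hT.inner_pow_self_nonneg n x
  calc ⟪x, f⟫ - 1 / 2 * ⟪f, (1 - T) f⟫
      ≤ ⟪x, g⟫ - 1 / 2 * ⟪g, (1 - T) g⟫ + ⟪x - (1 - T) g, f - g⟫ :=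
        (isPositive_one_sub_of_norm_le_one hT.isSymmetric hT1).inner_sub_half_inner_le x f g
    _ = 1 / 2 * ∑ n ∈ range (2 * N), ⟪x, (T ^ n) x⟫ + ⟪(T ^ N) x, f⟫ - ⟪(T ^ N) x, g⟫ := by
        rw [inner_sub_half_inner_one_sub_geom_sum x N hT.isSymmetric,
          one_sub_apply_geom_sum_apply, sub_sub_cancel, inner_sub_right, add_sub_assoc]
    _ ≤ 1 / 2 * ∑ n ∈ range (2 * N), ⟪x, (T ^ n) x⟫ + ‖(T ^ N) x‖ * ‖f‖ := by
        linarith [real_inner_le_norm ((T ^ N) x) f]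

end GeomSum

theorem tendsto_norm_pow_apply_of_summable {T : E →L[ℝ] E} (hT : (T : E →ₗ[ℝ] E).IsSymmetric)
    {x : E} (hx : Summable fun n : ℕ => ⟪x, (T ^ n) x⟫) :
    Tendsto (fun N : ℕ => ‖(T ^ N) x‖) atTop (𝓝 0) := by
  have hsq : ∀ N : ℕ, ‖(T ^ N) x‖ = √⟪x, (T ^ (2 * N)) x⟫ := fun N => by
    rw [two_mul, pow_add, mul_apply_eq_comp, ← inner_pow_apply_left hT,
      real_inner_self_eq_norm_sq, sqrt_sq (norm_nonneg _)]
  simpa only [hsq, sqrt_zero, Function.comp_def] using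
    (hx.tendsto_atTop_zero.comp (strictMono_mul_left_of_pos two_pos).tendsto_atTop).sqrt

end ContinuousLinearMap

theorem hilbert_rate_function_sum_general {H : Type*} [NormedAddCommGroup H]
    [InnerProductSpace ℝ H] [CompleteSpace H]
    (T : H →L[ℝ] H) (hTsa : IsSelfAdjoint T)
    (hTpos : ∀ f : H, 0 ≤ ⟪f, T f⟫)
    (hTnorm : ‖T‖ ≤ 1)
    (h : H) (hsum : Summable fun n : ℕ => ⟪h, (T ^ n) h⟫) :
    IsLUB
      (Set.range fun f : H =>
        ⟪h, f⟫ - (1 / 2) * ⟪f, (ContinuousLinearMap.id ℝ H - T) f⟫)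
      ((1 / 2) * ∑' n : ℕ, ⟪h, (T ^ n) h⟫) := by
  have hT : T.IsPositive :=
    (ContinuousLinearMap.isPositive_iff' T).2 ⟨hTsa, fun f => real_inner_comm f (T f) ▸ hTpos f⟩
  have hlim : Tendsto (fun N => 1 / 2 * ∑ n ∈ range (2 * N), ⟪h, (T ^ n) h⟫) atTop
      (𝓝 (1 / 2 * ∑' n : ℕ, ⟪h, (T ^ n) h⟫)) :=
    (hsum.hasSum.tendsto_sum_nat.comp
      (strictMono_mul_left_of_pos two_pos).tendsto_atTop).const_mul _
  refine ⟨?_, fun b hb => le_of_tendsto' hlim fun N => hb ⟨(∑ n ∈ range N, T ^ n) h,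
    ContinuousLinearMap.inner_sub_half_inner_one_sub_geom_sum h N hT.isSymmetric⟩⟩
  rintro _ ⟨f, rfl⟩
  have hbound := hlim.add
    ((ContinuousLinearMap.tendsto_norm_pow_apply_of_summable hT.isSymmetric hsum).mul_const ‖f‖)
  rw [zero_mul, add_zero] at hbound
  exact ge_of_tendsto' hbound (hT.inner_sub_half_inner_one_sub_le h · hTnorm f)

theorem hilbert_rate_function_sum {H : Type*} [NormedAddCommGroup H]
    [InnerProductSpace ℝ H] [CompleteSpace H]
    (T : H →L[ℝ] H) (hTsa : IsSelfAdjoint T)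
    (hTpos : ∀ f : H, 0 ≤ ⟪f, T f⟫)
    (hTnorm : ‖T‖ ≤ 1)
    (hinj : Function.Injective (ContinuousLinearMap.id ℝ H - T))
    (h : H) (hsum : Summable fun n : ℕ => ⟪h, (T ^ n) h⟫) :
    IsLUB
      (Set.range fun f : H =>
        ⟪h, f⟫ - (1 / 2) * ⟪f, (ContinuousLinearMap.id ℝ H - T) f⟫)
      ((1 / 2) * ∑' n : ℕ, ⟪h, (T ^ n) h⟫) :=
  hilbert_rate_function_sum_general T hTsa hTpos hTnorm h hsum
end
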